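/- Let u : Ω₁ → ℝⁿ be such that for a.e. x the approximate partial derivatives ∂_ξ(u·ξ) (with ξ = (e_n + e_α)/√2), ∂_α u_α, and ∂_n u_α exist. If moreover u_n is independent of x_n and u_α(x', x_n) = Tr(u_α)(x', −1/2) − (x_n + 1/2)ψ_α(x') with ψ_α approximately continuous at a.e. x', then the approximate partial derivative ∂_α u_n exists a.e. and satisfies ∂_α u_n = 2 ∂_ξ(u·ξ) − ∂_α u_α − ∂_n u_α a.e. in Ω₁. -/

import Mathlib

open MeasureTheory Set Filter
open scoped ENNReal

/-- One-dimensional approximate limit of `F : ℝ → ℝ` at `0` (excluding the point `0`):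
`aplim_{h→0} F(h) = d`. -/
def ApLim1 (F : ℝ → ℝ) (d : ℝ) : Prop :=
  ∀ ε > (0 : ℝ),
    Tendsto (fun r => volume {h : ℝ | h ∈ Set.Ioo (-r) r ∧ h ≠ 0 ∧ ε < |F h - d|}
        / ENNReal.ofReal (2 * r))
      (nhdsWithin 0 (Set.Ioi (0 : ℝ))) (nhds 0)

/-- Approximate partial derivative of `f` at `x` in the direction `v`, with value `d`. -/
def ApproxPartial (N : ℕ) (f : (Fin N → ℝ) → ℝ) (x v : Fin N → ℝ) (d : ℝ) : Prop :=
  ApLim1 (fun h => (f (x + h • v) - f x) / h) d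

/-- Projection of `ℝ^{n+1}` onto the first `n` coordinates. -/
def projH (n : ℕ) (x : Fin (n + 1) → ℝ) : Fin n → ℝ := fun i => x i.castSucc

/-- The `i`-th coordinate vector of `ℝ^{n+1}`. -/
def eVec (n : ℕ) (i : Fin (n + 1)) : Fin (n + 1) → ℝ := Pi.single i 1

/-- The diagonal direction `ξ = (e_n + e_α)/√2`. -/
noncomputable def xiVec (n : ℕ) (α : Fin n) : Fin (n + 1) → ℝ :=
  fun i => (eVec n α.castSucc i + eVec n (Fin.last n) i) / Real.sqrt 2

lemma apLim1_const (c : ℝ) : ApLim1 (fun _ => c) c := by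
  intro ε hε
  have hempty : ∀ r : ℝ, {t : ℝ | t ∈ Ioo (-r) r ∧ t ≠ 0 ∧ ε < |c - c|} = ∅ := fun r => by
    ext t; simp [hε.not_gt]
  simp only [hempty, measure_empty, ENNReal.zero_div]
  exact tendsto_const_nhds

lemma ApLim1.of_abs_sub_le_add {F G H : ℝ → ℝ} {a b c : ℝ} (hF : ApLim1 F a)
    (hG : ApLim1 G b) (hH : ∀ t ≠ 0, |H t - c| ≤ |F t - a| + |G t - b|) : ApLim1 H c := by
  intro ε hε
  have hsum := (hF (ε / 2) (half_pos hε)).add (hG (ε / 2) (half_pos hε))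
  rw [add_zero] at hsum
  refine tendsto_of_tendsto_of_tendsto_of_le_of_le tendsto_const_nhds hsum
    (fun _ => zero_le) (fun r => ?_)
  rw [← ENNReal.add_div]
  refine ENNReal.div_le_div_right
    ((measure_mono (μ := (volume : Measure ℝ)) ?_).trans (measure_union_le _ _)) _
  rintro t ⟨ht, ht0, hεt⟩
  by_contra hnot
  simp only [mem_union, mem_ofPred_eq, not_or, not_and, not_lt] at hnot
  linarith [hH t ht0, (hnot.1 ht ht0), (hnot.2 ht ht0)]

lemma ApLim1.congr {F G : ℝ → ℝ} {d : ℝ} (hF : ApLim1 F d) (hFG : ∀ t ≠ 0, F t = G t) :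
    ApLim1 G d :=
  hF.of_abs_sub_le_add (apLim1_const 0) fun t ht => by simp [hFG t ht]

lemma ApLim1.add {F G : ℝ → ℝ} {a b : ℝ} (hF : ApLim1 F a) (hG : ApLim1 G b) :
    ApLim1 (fun t => F t + G t) (a + b) :=
  hF.of_abs_sub_le_add hG fun t _ => by
    rw [add_sub_add_comm]; exact abs_add_le _ _

lemma ApLim1.sub {F G : ℝ → ℝ} {a b : ℝ} (hF : ApLim1 F a) (hG : ApLim1 G b) :
    ApLim1 (fun t => F t - G t) (a - b) :=
  hF.of_abs_sub_le_add hG fun t _ => by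
    rw [sub_sub_sub_comm]; exact abs_sub _ _

lemma ApLim1.eq_of_const {c d : ℝ} (h : ApLim1 (fun _ => c) d) : d = c := by
  by_contra hne
  have hcd : 0 < |c - d| := abs_pos.mpr (sub_ne_zero.mpr (Ne.symm hne))
  have hset : ∀ r : ℝ, {t : ℝ | t ∈ Ioo (-r) r ∧ t ≠ 0 ∧ |c - d| / 2 < |c - d|}
      = Ioo (-r) r \ {0} := fun r => by
    ext t; simp [half_lt_self hcd]
  have hratio : ∀ r ∈ Ioi (0 : ℝ), volume (Ioo (-r) r \ {0}) / ENNReal.ofReal (2 * r) = 1 := by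
    intro r (hr : 0 < r)
    rw [measure_sdiff_null (measure_singleton 0), Real.volume_Ioo, show r - -r = 2 * r by ring]
    exact ENNReal.div_self (ENNReal.ofReal_pos.mpr (by linarith)).ne' ENNReal.ofReal_ne_top
  have h1 := h (|c - d| / 2) (half_pos hcd)
  simp only [hset] at h1
  have h0 := h1.congr' (eventually_nhdsWithin_of_forall hratio)
  exact zero_ne_one (tendsto_nhds_unique h0 tendsto_const_nhds)

lemma ApLim1.comp_mul {F : ℝ → ℝ} {a c : ℝ} (hc : 0 < c) (hF : ApLim1 F a) :
    ApLim1 (fun t => F (c * t)) a := by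
  intro ε hε
  have hmul : Tendsto (c * ·) (nhdsWithin 0 (Ioi 0)) (nhdsWithin 0 (Ioi 0)) := by
    nth_rw 1 [← comap_mulLeft_nhdsGT_zero hc]; exact tendsto_comap
  refine ((hF ε hε).comp hmul).congr' ?_
  filter_upwards [self_mem_nhdsWithin] with r (hr : 0 < r)
  have hpre : {t : ℝ | t ∈ Ioo (-r) r ∧ t ≠ 0 ∧ ε < |F (c * t) - a|}
      = (c * ·) ⁻¹' {k : ℝ | k ∈ Ioo (-(c * r)) (c * r) ∧ k ≠ 0 ∧ ε < |F k - a|} := by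
    ext t
    have hIoo : c * t ∈ Ioo (-(c * r)) (c * r) ↔ t ∈ Ioo (-r) r := by
      rw [← mem_preimage, preimage_const_mul_Ioo₀ _ _ hc, neg_div, mul_div_cancel_left₀ _ hc.ne']
    simp only [mem_ofPred_eq, mem_preimage, hIoo, ne_eq, mul_eq_zero, hc.ne', false_or]
  show volume {k : ℝ | k ∈ Ioo (-(c * r)) (c * r) ∧ k ≠ 0 ∧ ε < |F k - a|}
      / ENNReal.ofReal (2 * (c * r)) = _
  rw [hpre, Real.volume_preimage_mul_left hc.ne', abs_of_pos (inv_pos.mpr hc),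
    ENNReal.ofReal_inv_of_pos hc, mul_left_comm, ENNReal.ofReal_mul hc.le,
    ENNReal.div_eq_inv_mul, ENNReal.div_eq_inv_mul,
    ENNReal.mul_inv (Or.inl (ENNReal.ofReal_pos.mpr hc).ne') (Or.inl ENNReal.ofReal_ne_top)]
  ring

lemma projH_add_smul_eVec_last (n : ℕ) (y : Fin (n + 1) → ℝ) (h : ℝ) :
    projH n (y + h • eVec n (Fin.last n)) = projH n y := by
  funext i
  simp [projH, eVec, (Fin.castSucc_lt_last i).ne]

lemma add_smul_eVec_last_apply_last (n : ℕ) (y : Fin (n + 1) → ℝ) (h : ℝ) :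
    (y + h • eVec n (Fin.last n)) (Fin.last n) = y (Fin.last n) + h := by
  simp [eVec]

lemma add_smul_eVec_castSucc_apply_last (n : ℕ) (α : Fin n) (y : Fin (n + 1) → ℝ) (h : ℝ) :
    (y + h • eVec n α.castSucc) (Fin.last n) = y (Fin.last n) := by
  simp [eVec, (Fin.castSucc_lt_last α).ne]

lemma sum_mul_xiVec (n : ℕ) (α : Fin n) (v : Fin (n + 1) → ℝ) :
    ∑ i, v i * xiVec n α i = (v α.castSucc + v (Fin.last n)) / Real.sqrt 2 := by
  simp only [xiVec, eVec, mul_div_assoc', ← Finset.sum_div]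
  simp [Pi.single_apply, mul_add, Finset.sum_add_distrib]

lemma sqrt_two_mul_smul_xiVec (n : ℕ) (α : Fin n) (h : ℝ) :
    (Real.sqrt 2 * h) • xiVec n α = h • eVec n α.castSucc + h • eVec n (Fin.last n) := by
  funext i
  simp only [Pi.smul_apply, smul_eq_mul, Pi.add_apply, xiVec]
  field_simp

lemma ApproxPartial.eq_neg_of_affine_last {n : ℕ} {f : (Fin (n + 1) → ℝ) → ℝ}
    {T ψ : (Fin n → ℝ) → ℝ}
    (hf : ∀ y, f y = T (projH n y) - (y (Fin.last n) + 1 / 2) * ψ (projH n y))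
    {x : Fin (n + 1) → ℝ} {d : ℝ} (hd : ApproxPartial (n + 1) f x (eVec n (Fin.last n)) d) :
    d = -ψ (projH n x) :=
  ApLim1.eq_of_const <| ApLim1.congr hd fun h hh => by
    rw [hf, hf, projH_add_smul_eVec_last, add_smul_eVec_last_apply_last]
    field_simp
    ring

/-- Since `x + √2 h ξ = x + h e_α + h e_n`, the diagonal difference quotient of `u · ξ`
splits into the `e_α`-quotients of `u_α` and `u_n` (the latter because `u_n` ignores `x_n`)
plus the `e_n`-increment of `u_α`, which is `-ψ_α(x' + h e_α)`. -/
lemma diffQuot_last_eq_polarization {n : ℕ} {u : (Fin (n + 1) → ℝ) → Fin (n + 1) → ℝ}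
    {α : Fin n} {T ψ : (Fin n → ℝ) → ℝ}
    (hind : ∀ x y : Fin (n + 1) → ℝ, projH n x = projH n y →
      u x (Fin.last n) = u y (Fin.last n))
    (hform : ∀ x : Fin (n + 1) → ℝ,
      u x α.castSucc = T (projH n x) - (x (Fin.last n) + 1 / 2) * ψ (projH n x))
    (x : Fin (n + 1) → ℝ) {h : ℝ} (hh : h ≠ 0) :
    (u (x + h • eVec n α.castSucc) (Fin.last n) - u x (Fin.last n)) / h =
      2 * ((∑ i, u (x + (Real.sqrt 2 * h) • xiVec n α) i * xiVec n α i
          - ∑ i, u x i * xiVec n α i) / (Real.sqrt 2 * h))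
        - (u (x + h • eVec n α.castSucc) α.castSucc - u x α.castSucc) / h
        + (ψ (projH n (x + h • eVec n α.castSucc)) - ψ (projH n x)) + ψ (projH n x) := by
  set y := x + h • eVec n α.castSucc
  have hdiag : x + (Real.sqrt 2 * h) • xiVec n α = y + h • eVec n (Fin.last n) := by
    rw [sqrt_two_mul_smul_xiVec, ← add_assoc]
  have hlast : u (y + h • eVec n (Fin.last n)) (Fin.last n) = u y (Fin.last n) :=
    hind _ _ (projH_add_smul_eVec_last n y h)
  have hy : y (Fin.last n) = x (Fin.last n) := add_smul_eVec_castSucc_apply_last n α x h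
  rw [hdiag, sum_mul_xiVec, sum_mul_xiVec, hlast, hform (y + _), hform y, hform x,
    projH_add_smul_eVec_last, add_smul_eVec_last_apply_last, hy]
  have hs : Real.sqrt 2 * Real.sqrt 2 = 2 := Real.mul_self_sqrt zero_le_two
  rw [div_sub_div_same, div_div, ← mul_assoc, hs]
  field_simp
  ring

lemma approxPartial_last_castSucc_of_polarization {n : ℕ}
    {u : (Fin (n + 1) → ℝ) → Fin (n + 1) → ℝ} {α : Fin n} {T ψ : (Fin n → ℝ) → ℝ}
    (hind : ∀ x y : Fin (n + 1) → ℝ, projH n x = projH n y →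
      u x (Fin.last n) = u y (Fin.last n))
    (hform : ∀ x : Fin (n + 1) → ℝ,
      u x α.castSucc = T (projH n x) - (x (Fin.last n) + 1 / 2) * ψ (projH n x))
    {x : Fin (n + 1) → ℝ} {Dxi Daa Dna : ℝ}
    (hxi : ApproxPartial (n + 1) (fun y => ∑ i, u y i * xiVec n α i) x (xiVec n α) Dxi)
    (haa : ApproxPartial (n + 1) (fun y => u y α.castSucc) x (eVec n α.castSucc) Daa)
    (hna : ApproxPartial (n + 1) (fun y => u y α.castSucc) x (eVec n (Fin.last n)) Dna)
    (hψ : ApLim1 (fun h => ψ (projH n (x + h • eVec n α.castSucc)) - ψ (projH n x)) 0) :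
    ApproxPartial (n + 1) (fun y => u y (Fin.last n)) x (eVec n α.castSucc)
      (2 * Dxi - Daa - Dna) := by
  have hDna : Dna = -ψ (projH n x) := ApproxPartial.eq_neg_of_affine_last hform hna
  have hdiag := ApLim1.comp_mul (Real.sqrt_pos.mpr zero_lt_two) hxi
  have hsum := ((hdiag.add hdiag).sub haa).add (hψ.add (apLim1_const (ψ (projH n x))))
  rw [show 2 * Dxi - Daa - Dna = Dxi + Dxi - Daa + (0 + ψ (projH n x)) by rw [hDna]; ring]
  refine hsum.congr fun h hh => ?_
  rw [diffQuot_last_eq_polarization hind hform x hh]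
  ring

/-- Polarization identity for the approximate partial derivative `∂_α u_n`
(formula (appgra) of the paper).  Let `u : Ω₁ → ℝ^{n+1}`, `α` an in-plane index, and
`ξ = (e_n + e_α)/√2`.  Suppose that a.e. on `Ω₁` the approximate partial derivatives
`∂_ξ(u·ξ)`, `∂_α u_α` and `∂_n u_α` exist, that `u_n` is independent of `x_n`, and that
`u_α(x', x_n) = Tr(u_α)(x', −1/2) − (x_n + 1/2) ψ_α(x')` with `ψ_α` approximately
continuous (along `e_α`) at a.e. point.  Then the approximate partial derivative
`∂_α u_n` exists a.e. in `Ω₁` and `∂_α u_n = 2 ∂_ξ(u·ξ) − ∂_α u_α − ∂_n u_α`. -/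
theorem stmt15 (n : ℕ) (ω : Set (Fin n → ℝ))
    (u : (Fin (n + 1) → ℝ) → Fin (n + 1) → ℝ) (α : Fin n)
    (T ψa : (Fin n → ℝ) → ℝ)
    (hind : ∀ x y : Fin (n + 1) → ℝ, projH n x = projH n y →
      u x (Fin.last n) = u y (Fin.last n))
    (hform : ∀ x : Fin (n + 1) → ℝ,
      u x α.castSucc = T (projH n x) - (x (Fin.last n) + 1 / 2) * ψa (projH n x))
    (Dxi Daa Dna : (Fin (n + 1) → ℝ) → ℝ)
    (hxi : ∀ᵐ x ∂(volume.restrict {x : Fin (n + 1) → ℝ |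
        projH n x ∈ ω ∧ x (Fin.last n) ∈ Set.Ioo (-(1:ℝ)/2) (1/2)}),
      ApproxPartial (n + 1) (fun y => ∑ i, u y i * xiVec n α i) x (xiVec n α) (Dxi x))
    (haa : ∀ᵐ x ∂(volume.restrict {x : Fin (n + 1) → ℝ |
        projH n x ∈ ω ∧ x (Fin.last n) ∈ Set.Ioo (-(1:ℝ)/2) (1/2)}),
      ApproxPartial (n + 1) (fun y => u y α.castSucc) x (eVec n α.castSucc) (Daa x))
    (hna : ∀ᵐ x ∂(volume.restrict {x : Fin (n + 1) → ℝ |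
        projH n x ∈ ω ∧ x (Fin.last n) ∈ Set.Ioo (-(1:ℝ)/2) (1/2)}),
      ApproxPartial (n + 1) (fun y => u y α.castSucc) x (eVec n (Fin.last n)) (Dna x))
    (hψ : ∀ᵐ x ∂(volume.restrict {x : Fin (n + 1) → ℝ |
        projH n x ∈ ω ∧ x (Fin.last n) ∈ Set.Ioo (-(1:ℝ)/2) (1/2)}),
      ApLim1 (fun h => ψa (projH n (x + h • eVec n α.castSucc)) - ψa (projH n x)) 0) :
    ∀ᵐ x ∂(volume.restrict {x : Fin (n + 1) → ℝ |
        projH n x ∈ ω ∧ x (Fin.last n) ∈ Set.Ioo (-(1:ℝ)/2) (1/2)}),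
      ApproxPartial (n + 1) (fun y => u y (Fin.last n))
        x (eVec n α.castSucc) (2 * Dxi x - Daa x - Dna x) := by
  filter_upwards [hxi, haa, hna, hψ] with x hxi_x haa_x hna_x hψ_x
  exact approxPartial_last_castSucc_of_polarization hind hform hxi_x haa_x hna_x hψ_x
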